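/- arXiv:2403.15618 — 5 statements merged into one kernel-verified Lean document; each statement's English description precedes it below -/
import Mathlib

section
/- With the matrices A, X, Y₁, …, Y_{2n} defined as in the context, the following commutator identities hold in gl(2n+2, ℂ): [A, X] = c·X; for every 1 ≤ j ≤ n, [A, Y_j] = Σ_{i=1}^{n} Re(Δ_{ij})·Y_i + Σ_{i=1}^{n} Im(Δ_{ij})·Y_{n+i} and [A, Y_{n+j}] = −Σ_{i=1}^{n} Im(Δ_{ij})·Y_i + Σ_{i=1}^{n} Re(Δ_{ij})·Y_{n+i}; [X, Y_j] = 0 for all 1 ≤ j ≤ 2n; and [Y_j, Y_k] = 0 for all 1 ≤ j, k ≤ 2n. -/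
/-!
Statement 3: commutator identities in `gl(2n+2, ℂ)` for the generators
`A = blockdiag(c, Δ, conj Δ, 0)`, `X`, `Y₁, …, Y_{2n}` of the Lie algebra of the
solvable group realizing the Endo–Pajitnov manifold.
-/

open Matrix

/-- The index type for the `(2n+2) × (2n+2)` block matrices, with blocks of
sizes `1, n, n, 1`. -/
abbrev EPIdx (n : ℕ) := (Unit ⊕ Fin n) ⊕ (Fin n ⊕ Unit)

/-- The commutator bracket on matrices. -/
noncomputable def brk {m : Type*} [Fintype m] (P Q : Matrix m m ℂ) : Matrix m m ℂ := P * Q - Q * P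

/-- `A = blockdiag(c, Δ, conj Δ, 0)`, diagonal blocks of sizes `1, n, n, 1`. -/
noncomputable def Agen (n : ℕ) (c : ℝ) (Δ : Matrix (Fin n) (Fin n) ℂ) :
    Matrix (EPIdx n) (EPIdx n) ℂ :=
  Matrix.fromBlocks
    (Matrix.fromBlocks (Matrix.of fun _ _ => (c : ℂ)) 0 0 Δ) 0 0
    (Matrix.fromBlocks (Δ.map (starRingEnd ℂ)) 0 0 0)

/-- `X`: only nonzero entry is `1` in position `(1, 2n+2)`. -/
noncomputable def Xgen (n : ℕ) : Matrix (EPIdx n) (EPIdx n) ℂ :=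
  Matrix.fromBlocks 0 (Matrix.fromBlocks 0 (Matrix.of fun _ _ => (1 : ℂ)) 0 0) 0 0

/-- `Y_j` (for `1 ≤ j ≤ n`): only nonzero entries are `1` in positions
`(1+j, 2n+2)` and `(n+1+j, 2n+2)`. -/
noncomputable def Ygen (n : ℕ) (j : Fin n) : Matrix (EPIdx n) (EPIdx n) ℂ :=
  Matrix.fromBlocks 0
    (Matrix.fromBlocks 0 0 0 (Matrix.replicateCol Unit (Pi.single j (1 : ℂ)))) 0
    (Matrix.fromBlocks 0 (Matrix.replicateCol Unit (Pi.single j (1 : ℂ))) 0 0)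

/-- `Y_{n+j}` (for `1 ≤ j ≤ n`): only nonzero entries are `i` in position
`(1+j, 2n+2)` and `−i` in position `(n+1+j, 2n+2)`. -/
noncomputable def Ygen' (n : ℕ) (j : Fin n) : Matrix (EPIdx n) (EPIdx n) ℂ :=
  Matrix.fromBlocks 0
    (Matrix.fromBlocks 0 0 0 (Matrix.replicateCol Unit (Pi.single j Complex.I))) 0
    (Matrix.fromBlocks 0 (Matrix.replicateCol Unit (Pi.single j (-Complex.I))) 0 0)

/-!
The generators `X`, `Y_j`, `Y_{n+j}` are all of the form `v e_lastᵀ` with `v_last = 0`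
(`epColumn`, `epVec`). Two such matrices multiply to `0`, so they commute, and since the last
row of `A` vanishes, `[A, v e_lastᵀ] = (A v) e_lastᵀ`. The remaining identities then only
compare `A v` for `v = (0, e_j, e_j, 0)` and `v = (0, i e_j, -i e_j, 0)` with the real and
imaginary parts of the column `Δ e_j`.
-/

section Commutator

variable {R m : Type*} [Ring R] [Fintype m] [DecidableEq m]

theorem mul_vecMulVec_single_sub_of_row_eq_zero {A : Matrix m m R} {k : m} (hA : A k = 0)
    (v : m → R) :
    A * vecMulVec v (Pi.single k 1) - vecMulVec v (Pi.single k 1) * A =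
      vecMulVec (A *ᵥ v) (Pi.single k 1) := by
  rw [mul_vecMulVec, vecMulVec_mul, single_one_vecMul, row, hA, vecMulVec_zero, sub_zero]

theorem commute_vecMulVec_single {u v : m → R} {k : m} (hu : u k = 0) (hv : v k = 0) :
    Commute (vecMulVec u (Pi.single k 1)) (vecMulVec v (Pi.single k 1)) := by
  simp [Commute, SemiconjBy, vecMulVec_mul_vecMulVec, hu, hv]

end Commutator

section EndoPajitnov

variable {n : ℕ}

def epLast (n : ℕ) : EPIdx n := Sum.inr (Sum.inr ())

noncomputable def epColumn (n : ℕ) : (EPIdx n → ℂ) →ₗ[ℂ] Matrix (EPIdx n) (EPIdx n) ℂ :=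
  (vecMulVecBilin ℂ ℂ).flip (Pi.single (epLast n) 1)

def epVec (a : ℂ) (p q : Fin n → ℂ) : EPIdx n → ℂ :=
  Sum.elim (Sum.elim (fun _ => a) p) (Sum.elim q 0)

theorem Xgen_eq_epColumn : Xgen n = epColumn n (epVec 1 0 0) := by
  ext ((⟨⟩|i)|(i|⟨⟩)) ((⟨⟩|j)|(j|⟨⟩)) <;> simp [Xgen, epColumn, epVec, epLast, vecMulVec_apply]

theorem Ygen_eq_epColumn (j : Fin n) :
    Ygen n j = epColumn n (epVec 0 (Pi.single j 1) (Pi.single j 1)) := by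
  ext ((⟨⟩|i)|(i|⟨⟩)) ((⟨⟩|k)|(k|⟨⟩)) <;>
    simp [Ygen, epColumn, epVec, epLast, vecMulVec_apply, Pi.single_apply]

theorem Ygen'_eq_epColumn (j : Fin n) :
    Ygen' n j = epColumn n (epVec 0 (Pi.single j Complex.I) (Pi.single j (-Complex.I))) := by
  ext ((⟨⟩|i)|(i|⟨⟩)) ((⟨⟩|k)|(k|⟨⟩)) <;>
    simp [Ygen', epColumn, epVec, epLast, vecMulVec_apply, Pi.single_apply]

theorem Agen_row_epLast (c : ℝ) (Δ : Matrix (Fin n) (Fin n) ℂ) : Agen n c Δ (epLast n) = 0 := by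
  ext ((⟨⟩|i)|(i|⟨⟩)) <;> simp [Agen, epLast]

theorem Agen_mulVec_epVec (c : ℝ) (Δ : Matrix (Fin n) (Fin n) ℂ) (a : ℂ) (p q : Fin n → ℂ) :
    Agen n c Δ *ᵥ epVec a p q = epVec (c * a) (Δ *ᵥ p) (Δ.map (starRingEnd ℂ) *ᵥ q) := by
  ext ((⟨⟩|i)|(i|⟨⟩)) <;> simp [Agen, epVec, mulVec, dotProduct, Fintype.sum_sum_type]

theorem brk_Agen_epColumn (c : ℝ) (Δ : Matrix (Fin n) (Fin n) ℂ) (v : EPIdx n → ℂ) :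
    brk (Agen n c Δ) (epColumn n v) = epColumn n (Agen n c Δ *ᵥ v) :=
  mul_vecMulVec_single_sub_of_row_eq_zero (Agen_row_epLast c Δ) v

theorem brk_epColumn_eq_zero {u v : EPIdx n → ℂ} (hu : u (epLast n) = 0) (hv : v (epLast n) = 0) :
    brk (epColumn n u) (epColumn n v) = 0 :=
  sub_eq_zero.mpr (commute_vecMulVec_single hu hv).eq

theorem epVec_eq_sum_re_im (z : Fin n → ℂ) :
    epVec 0 z (starRingEnd ℂ ∘ z) =
      ∑ i, ((z i).re : ℂ) • epVec 0 (Pi.single i 1) (Pi.single i 1) +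
        ∑ i, ((z i).im : ℂ) • epVec 0 (Pi.single i Complex.I) (Pi.single i (-Complex.I)) := by
  ext ((⟨⟩|i)|(i|⟨⟩)) <;> simp [epVec, Finset.sum_apply, Pi.single_apply, Complex.ext_iff]

theorem epVec_I_smul_eq_sum_re_im (z : Fin n → ℂ) :
    epVec 0 (Complex.I • z) (-Complex.I • (starRingEnd ℂ ∘ z)) =
      -∑ i, ((z i).im : ℂ) • epVec 0 (Pi.single i 1) (Pi.single i 1) +
        ∑ i, ((z i).re : ℂ) • epVec 0 (Pi.single i Complex.I) (Pi.single i (-Complex.I)) := by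
  ext ((⟨⟩|i)|(i|⟨⟩)) <;> simp [epVec, Finset.sum_apply, Pi.single_apply, Complex.ext_iff]

end EndoPajitnov

theorem EP_structure_equations_general (n : ℕ) (c : ℝ)
    (Δ : Matrix (Fin n) (Fin n) ℂ) :
    brk (Agen n c Δ) (Xgen n) = (c : ℂ) • Xgen n ∧
    (∀ j : Fin n,
      brk (Agen n c Δ) (Ygen n j) =
        ∑ i : Fin n, ((Δ i j).re : ℂ) • Ygen n i +
          ∑ i : Fin n, ((Δ i j).im : ℂ) • Ygen' n i) ∧
    (∀ j : Fin n,
      brk (Agen n c Δ) (Ygen' n j) =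
        -∑ i : Fin n, ((Δ i j).im : ℂ) • Ygen n i +
          ∑ i : Fin n, ((Δ i j).re : ℂ) • Ygen' n i) ∧
    (∀ j : Fin n, brk (Xgen n) (Ygen n j) = 0 ∧ brk (Xgen n) (Ygen' n j) = 0) ∧
    (∀ j k : Fin n,
      brk (Ygen n j) (Ygen n k) = 0 ∧ brk (Ygen n j) (Ygen' n k) = 0 ∧
      brk (Ygen' n j) (Ygen n k) = 0 ∧ brk (Ygen' n j) (Ygen' n k) = 0) := by
  simp only [Xgen_eq_epColumn, Ygen_eq_epColumn, Ygen'_eq_epColumn, brk_Agen_epColumn,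
    Agen_mulVec_epVec, ← map_smul, ← map_sum, ← map_neg, ← map_add]
  refine ⟨?_, fun j => ?_, fun j => ?_, fun j => ⟨?_, ?_⟩, fun j k => ⟨?_, ?_, ?_, ?_⟩⟩
  · congr 1
    ext ((⟨⟩|i)|(i|⟨⟩)) <;> simp [epVec]
  · rw [mul_zero, mulVec_single_one, mulVec_single_one, col_map]
    exact congrArg _ (epVec_eq_sum_re_im _)
  · rw [mul_zero, mulVec_single, mulVec_single, op_smul_eq_smul, op_smul_eq_smul, col_map]
    exact congrArg _ (epVec_I_smul_eq_sum_re_im _)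
  all_goals exact brk_epColumn_eq_zero rfl rfl

theorem EP_structure_equations (n : ℕ) (hn : 1 ≤ n) (c : ℝ)
    (Δ : Matrix (Fin n) (Fin n) ℂ) :
    brk (Agen n c Δ) (Xgen n) = (c : ℂ) • Xgen n ∧
    (∀ j : Fin n,
      brk (Agen n c Δ) (Ygen n j) =
        ∑ i : Fin n, ((Δ i j).re : ℂ) • Ygen n i +
          ∑ i : Fin n, ((Δ i j).im : ℂ) • Ygen' n i) ∧
    (∀ j : Fin n,
      brk (Agen n c Δ) (Ygen' n j) =
        -∑ i : Fin n, ((Δ i j).im : ℂ) • Ygen n i +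
          ∑ i : Fin n, ((Δ i j).re : ℂ) • Ygen' n i) ∧
    (∀ j : Fin n, brk (Xgen n) (Ygen n j) = 0 ∧ brk (Xgen n) (Ygen' n j) = 0) ∧
    (∀ j k : Fin n,
      brk (Ygen n j) (Ygen n k) = 0 ∧ brk (Ygen n j) (Ygen' n k) = 0 ∧
      brk (Ygen' n j) (Ygen n k) = 0 ∧ brk (Ygen' n j) (Ygen' n k) = 0) :=
  EP_structure_equations_general n c Δ
end

section
/- Assume Δ is upper triangular. Then the real linear span 𝔤 of { A, X, Y₁, …, Y_{2n} } inside the (2n+2)×(2n+2) complex matrices is closed under the commutator bracket (i.e., it is a real Lie subalgebra of gl(2n+2, ℂ)), and 𝔤 is a solvable Lie algebra. -/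
/-!
Statement 4: for upper-triangular `Δ`, the real span `𝔤` of the generators
`A, X, Y₁, …, Y_{2n}` inside the `(2n+2) × (2n+2)` complex matrices is closed under
the commutator bracket, and `𝔤` is a solvable real Lie algebra.
-/

open Matrix

attribute [local instance 100] LieRing.ofAssociativeRing

/-- The set of generators `{A, X, Y₁, …, Y_{2n}}`. -/
noncomputable def EPgens (n : ℕ) (c : ℝ) (Δ : Matrix (Fin n) (Fin n) ℂ) :
    Set (Matrix (EPIdx n) (EPIdx n) ℂ) :=
  {Agen n c Δ, Xgen n} ∪ Set.range (Ygen n) ∪ Set.range (Ygen' n)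

/-!
The span is `ℝ A + W` with `W = span {X, Y₁, …, Y_{2n}}`. Every element of `W` is supported
in the last column and vanishes in the last row, so products of elements of `W` are zero and
`W` is abelian. Since `A X = c X`, `A Y(v) = Y(Δ v)` (where `Y(v)` carries `v` and `conj v` in
the last column) and `X A = Y(v) A = 0`, also `[A, W] ⊆ W`. Hence every bracket of the span lies
in the abelian subspace `W`: the span is closed under brackets and has derived length at most 2.
-/

section LieAbelianExtension

variable {R L : Type*} [CommRing R] [LieRing L] [LieAlgebra R L]

theorem lie_mem_of_mem_span_singleton_sup {a : L} {W : Submodule R L}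
    (hW : ∀ x ∈ W, ∀ y ∈ W, ⁅x, y⁆ = 0) (ha : ∀ w ∈ W, ⁅a, w⁆ ∈ W) {x y : L}
    (hx : x ∈ (R ∙ a) ⊔ W) (hy : y ∈ (R ∙ a) ⊔ W) : ⁅x, y⁆ ∈ W := by
  obtain ⟨_, hra, p, hp, rfl⟩ := Submodule.mem_sup.mp hx
  obtain ⟨_, hsa, q, hq, rfl⟩ := Submodule.mem_sup.mp hy
  obtain ⟨r, rfl⟩ := Submodule.mem_span_singleton.mp hra
  obtain ⟨s, rfl⟩ := Submodule.mem_span_singleton.mp hsa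
  have hexpand : ⁅r • a + p, s • a + q⁆ = r • ⁅a, q⁆ - s • ⁅a, p⁆ + ⁅p, q⁆ := by
    simp only [add_lie, lie_add, smul_lie, lie_smul, lie_self, ← lie_skew a p]
    module
  rw [hexpand, hW p hp q hq, add_zero]
  exact sub_mem (W.smul_mem r (ha q hq)) (W.smul_mem s (ha p hp))

theorem LieSubalgebra.isSolvable_of_lie_mem {K : LieSubalgebra R L} {W : Submodule R L}
    (hK : ∀ x ∈ K, ∀ y ∈ K, ⁅x, y⁆ ∈ W) (hW : ∀ x ∈ W, ∀ y ∈ W, ⁅x, y⁆ = 0) :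
    LieAlgebra.IsSolvable K := by
  have hderived : ∀ z ∈ LieAlgebra.derivedSeries R K 1, (z : L) ∈ W := by
    intro z hz
    replace hz : z ∈ Submodule.span R {⁅x, y⁆ | (x : K) (y : K)} := by
      rw [← LieAlgebra.coe_derivedSeries_one_eq]; exact hz
    refine (Submodule.span_le (p := W.comap K.toSubmodule.subtype)).mpr ?_ hz
    rintro _ ⟨x, y, rfl⟩
    exact hK x x.2 y y.2
  refine LieAlgebra.IsSolvable.mk (R := R) (k := 2) ?_
  rw [LieAlgebra.derivedSeries_def, LieAlgebra.derivedSeriesOfIdeal_succ,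
    LieSubmodule.lie_eq_bot_iff]
  exact fun x hx y hy => Subtype.ext (hW x (hderived x hx) y (hderived y hy))

end LieAbelianExtension

section StrictColumn

variable (R : Type*) {α ι : Type*} [Semiring R]

def Matrix.strictColumnSubmodule [AddCommMonoid α] [Module R α] (e : ι) : Submodule R (Matrix ι ι α) where
  carrier := {M | (∀ i j, j ≠ e → M i j = 0) ∧ ∀ j, M e j = 0}
  zero_mem' := ⟨fun _ _ _ => rfl, fun _ => rfl⟩
  add_mem' hM hN :=
    ⟨fun i j hj => by simp [hM.1 i j hj, hN.1 i j hj], fun j => by simp [hM.2 j, hN.2 j]⟩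
  smul_mem' r _ hM :=
    ⟨fun i j hj => by simp [hM.1 i j hj], fun j => by simp [hM.2 j]⟩

variable {R}

theorem Matrix.mul_eq_zero_of_mem_strictColumnSubmodule [NonUnitalNonAssocSemiring α]
    [Module R α] [Fintype ι] {e : ι} {M N : Matrix ι ι α}
    (hM : M ∈ strictColumnSubmodule R e) (hN : N ∈ strictColumnSubmodule R e) : M * N = 0 := by
  ext i j
  rw [Matrix.mul_apply, Matrix.zero_apply]
  refine Finset.sum_eq_zero fun k _ => ?_
  by_cases hk : k = e
  · rw [hk, hN.2 j, mul_zero]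
  · rw [hM.1 i k hk, zero_mul]

end StrictColumn

section Generators

variable {n : ℕ} {c : ℝ} {Δ : Matrix (Fin n) (Fin n) ℂ}

noncomputable def Yvec (n : ℕ) (v : Fin n → ℂ) : Matrix (EPIdx n) (EPIdx n) ℂ :=
  Matrix.fromBlocks 0
    (Matrix.fromBlocks 0 0 0 (Matrix.replicateCol Unit v)) 0
    (Matrix.fromBlocks 0 (Matrix.replicateCol Unit fun k => starRingEnd ℂ (v k)) 0 0)

noncomputable def spanXY (n : ℕ) : Submodule ℝ (Matrix (EPIdx n) (EPIdx n) ℂ) :=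
  Submodule.span ℝ ({Xgen n} ∪ Set.range (Ygen n) ∪ Set.range (Ygen' n))

theorem Yvec_single_one (j : Fin n) : Yvec n (Pi.single j 1) = Ygen n j := by
  ext i k
  rcases i with (i | i) | (i | i) <;> rcases k with (k | k) | (k | k) <;>
    simp [Yvec, Ygen, Pi.single_apply, apply_ite (starRingEnd ℂ)]

theorem Yvec_single_I (j : Fin n) : Yvec n (Pi.single j Complex.I) = Ygen' n j := by
  ext i k
  rcases i with (i | i) | (i | i) <;> rcases k with (k | k) | (k | k) <;>
    simp [Yvec, Ygen', Pi.single_apply, apply_ite (starRingEnd ℂ)]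

theorem Yvec_eq_sum (v : Fin n → ℂ) :
    Yvec n v = ∑ j, ((v j).re • Ygen n j + (v j).im • Ygen' n j) := by
  ext i k
  rcases i with (i | i) | (i | i) <;> rcases k with (k | k) | (k | k) <;>
    simp [Yvec, Ygen, Ygen', Matrix.sum_apply, Pi.single_apply, Complex.real_smul,
      Finset.sum_add_distrib, Complex.ext_iff]

theorem Yvec_mem_spanXY (v : Fin n → ℂ) : Yvec n v ∈ spanXY n := by
  rw [Yvec_eq_sum]
  refine Submodule.sum_mem _ fun j _ => add_mem ?_ ?_
  · exact Submodule.smul_mem _ _ (Submodule.subset_span (Or.inl (Or.inr ⟨j, rfl⟩)))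
  · exact Submodule.smul_mem _ _ (Submodule.subset_span (Or.inr ⟨j, rfl⟩))

theorem Agen_mul_Xgen : Agen n c Δ * Xgen n = c • Xgen n := by
  ext i j
  rcases i with (i | i) | (i | i) <;> rcases j with (j | j) | (j | j) <;>
    simp [Agen, Xgen, Matrix.mul_apply, Complex.real_smul]

theorem Xgen_mul_Agen : Xgen n * Agen n c Δ = 0 := by
  simp [Agen, Xgen, Matrix.fromBlocks_multiply]

theorem Agen_mul_Yvec (v : Fin n → ℂ) : Agen n c Δ * Yvec n v = Yvec n (Δ *ᵥ v) := by
  simp only [Agen, Yvec, Matrix.fromBlocks_multiply, Matrix.mul_zero, Matrix.zero_mul,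
    add_zero, zero_add]
  congr 3
  ext i j
  simp [Matrix.mul_apply, Matrix.mulVec, dotProduct, map_sum]

theorem Yvec_mul_Agen (v : Fin n → ℂ) : Yvec n v * Agen n c Δ = 0 := by
  simp [Agen, Yvec, Matrix.fromBlocks_multiply]

theorem spanXY_le_strictColumnSubmodule :
    spanXY n ≤ Matrix.strictColumnSubmodule ℝ (Sum.inr (Sum.inr ())) := by
  have hY : ∀ v, Yvec n v ∈ Matrix.strictColumnSubmodule ℝ (Sum.inr (Sum.inr ())) := by
    refine fun v => ⟨fun i j hj => ?_, fun j => ?_⟩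
    · rcases i with (i | i) | (i | i) <;> rcases j with (j | j) | (j | j) <;>
        simp_all [Yvec]
    · rcases j with (j | j) | (j | j) <;> simp [Yvec]
  refine Submodule.span_le.mpr ?_
  rintro _ ((rfl | ⟨j, rfl⟩) | ⟨j, rfl⟩)
  · refine ⟨fun i j hj => ?_, fun j => ?_⟩
    · rcases i with (i | i) | (i | i) <;> rcases j with (j | j) | (j | j) <;>
        simp_all [Xgen]
    · rcases j with (j | j) | (j | j) <;> simp [Xgen]
  · simpa only [Yvec_single_one, SetLike.mem_coe] using hY (Pi.single j 1)
  · simpa only [Yvec_single_I, SetLike.mem_coe] using hY (Pi.single j Complex.I)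

theorem lie_eq_zero_of_mem_spanXY {P Q : Matrix (EPIdx n) (EPIdx n) ℂ}
    (hP : P ∈ spanXY n) (hQ : Q ∈ spanXY n) : ⁅P, Q⁆ = 0 := by
  have hP' := spanXY_le_strictColumnSubmodule hP
  have hQ' := spanXY_le_strictColumnSubmodule hQ
  rw [Ring.lie_def, Matrix.mul_eq_zero_of_mem_strictColumnSubmodule hP' hQ',
    Matrix.mul_eq_zero_of_mem_strictColumnSubmodule hQ' hP', sub_zero]

theorem lie_Agen_mem_spanXY {P : Matrix (EPIdx n) (EPIdx n) ℂ} (hP : P ∈ spanXY n) :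
    ⁅Agen n c Δ, P⁆ ∈ spanXY n := by
  have hle : spanXY n ≤ (spanXY n).comap (LieAlgebra.ad ℝ _ (Agen n c Δ) : _ →ₗ[ℝ] _) := by
    refine Submodule.span_le.mpr ?_
    rintro _ ((rfl | ⟨j, rfl⟩) | ⟨j, rfl⟩) <;>
      simp only [SetLike.mem_coe, Submodule.mem_comap, LieAlgebra.ad_apply, Ring.lie_def]
    · rw [Agen_mul_Xgen, Xgen_mul_Agen, sub_zero]
      exact Submodule.smul_mem _ _ (Submodule.subset_span (Or.inl (Or.inl rfl)))
    · rw [← Yvec_single_one, Agen_mul_Yvec, Yvec_mul_Agen, sub_zero]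
      exact Yvec_mem_spanXY _
    · rw [← Yvec_single_I, Agen_mul_Yvec, Yvec_mul_Agen, sub_zero]
      exact Yvec_mem_spanXY _
  exact hle hP

theorem span_EPgens_eq : Submodule.span ℝ (EPgens n c Δ) = (ℝ ∙ Agen n c Δ) ⊔ spanXY n := by
  rw [spanXY, ← Submodule.span_insert]
  simp only [EPgens, Set.insert_union, Set.union_assoc]

end Generators

theorem EP_span_lie_solvable_general (n : ℕ) (c : ℝ)
    (Δ : Matrix (Fin n) (Fin n) ℂ) :
    (∀ P ∈ Submodule.span ℝ (EPgens n c Δ), ∀ Q ∈ Submodule.span ℝ (EPgens n c Δ),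
      P * Q - Q * P ∈ Submodule.span ℝ (EPgens n c Δ)) ∧
    ∃ L : LieSubalgebra ℝ (Matrix (EPIdx n) (EPIdx n) ℂ),
      (L : Set (Matrix (EPIdx n) (EPIdx n) ℂ)) =
        (Submodule.span ℝ (EPgens n c Δ) : Set (Matrix (EPIdx n) (EPIdx n) ℂ)) ∧
      LieAlgebra.IsSolvable L := by
  have hderived : ∀ P ∈ Submodule.span ℝ (EPgens n c Δ), ∀ Q ∈ Submodule.span ℝ (EPgens n c Δ),
      ⁅P, Q⁆ ∈ spanXY n := by
    simp only [span_EPgens_eq]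
    exact fun P hP Q hQ => lie_mem_of_mem_span_singleton_sup
      (fun _ hx _ hy => lie_eq_zero_of_mem_spanXY hx hy) (fun _ => lie_Agen_mem_spanXY) hP hQ
  have hclosed : ∀ P ∈ Submodule.span ℝ (EPgens n c Δ), ∀ Q ∈ Submodule.span ℝ (EPgens n c Δ),
      ⁅P, Q⁆ ∈ Submodule.span ℝ (EPgens n c Δ) := fun P hP Q hQ => by
    rw [span_EPgens_eq]
    exact Submodule.mem_sup_right (hderived P hP Q hQ)
  refine ⟨fun P hP Q hQ => Ring.lie_def P Q ▸ hclosed P hP Q hQ,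
    { Submodule.span ℝ (EPgens n c Δ) with lie_mem' := fun hP hQ => hclosed _ hP _ hQ }, rfl, ?_⟩
  exact LieSubalgebra.isSolvable_of_lie_mem hderived
    fun _ hx _ hy => lie_eq_zero_of_mem_spanXY hx hy

theorem EP_span_lie_solvable (n : ℕ) (hn : 1 ≤ n) (c : ℝ)
    (Δ : Matrix (Fin n) (Fin n) ℂ) (hΔ : ∀ i j : Fin n, j < i → Δ i j = 0) :
    (∀ P ∈ Submodule.span ℝ (EPgens n c Δ), ∀ Q ∈ Submodule.span ℝ (EPgens n c Δ),
      P * Q - Q * P ∈ Submodule.span ℝ (EPgens n c Δ)) ∧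
    ∃ L : LieSubalgebra ℝ (Matrix (EPIdx n) (EPIdx n) ℂ),
      (L : Set (Matrix (EPIdx n) (EPIdx n) ℂ)) =
        (Submodule.span ℝ (EPgens n c Δ) : Set (Matrix (EPIdx n) (EPIdx n) ℂ)) ∧
      LieAlgebra.IsSolvable L :=
  EP_span_lie_solvable_general n c Δ
end

section
/- Let n > 1 and let P ∈ ℤ[X] be a monic polynomial of degree 2n+1 that splits in ℤ[X] as P = f₀·h, where: f₀ is monic of degree 3, has exactly one real root α, this root satisfies α > 0 and α ≠ 1, and f₀(0) = −1; and h is monic, self-reciprocal, has no real roots, and every irreducible factor of h (in its unique factorization in ℤ[X]) has no multiple complex roots. Then there exists a (2n+1)×(2n+1) integer matrix M with det M = 1, with characteristic polynomial equal to P, and which is diagonalizable over ℂ (i.e., similar over ℂ to a diagonal matrix). -/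
/-!
Factor `P` into monic irreducibles `q` in `ℤ[X]` and take the block sum of the matrices of
multiplication by `X` on `ℤ[X]/(q)`. By Gauss's lemma each `q` is irreducible over `ℚ`, hence
separable, so each block is annihilated by a squarefree polynomial and is diagonalizable over `ℂ`.
The determinant of a matrix of odd size with characteristic polynomial `P` is `-P(0)`, and
`P(0) = f₀(0) h(0) = -1` because self-reciprocity makes `h(0)` the leading coefficient of `h`.
-/

open Polynomial

namespace Matrix

variable {m n K : Type*} [Fintype m] [DecidableEq m] [Fintype n] [DecidableEq n]

def IsDiagonalizable [CommRing K] (A : Matrix n n K) : Prop :=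
  ∃ (U : (Matrix n n K)ˣ) (d : n → K),
    A = (U : Matrix n n K) * diagonal d * ((U⁻¹ : (Matrix n n K)ˣ) : Matrix n n K)

theorem IsDiagonalizable.reindex [CommRing K] {A : Matrix m m K} (hA : A.IsDiagonalizable)
    (e : m ≃ n) : (reindex e e A).IsDiagonalizable := by
  obtain ⟨U, d, rfl⟩ := hA
  let Φ : Matrix m m K →* Matrix n n K := reindexAlgEquiv K K e
  refine ⟨Units.map Φ U, d ∘ e.symm, ?_⟩
  rw [← map_inv, Units.coe_map, Units.coe_map, ← submatrix_diagonal_equiv]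
  simp only [Φ, MonoidHom.coe_coe, coe_reindexAlgEquiv, reindex_apply, submatrix_mul_equiv]

theorem IsDiagonalizable.fromBlocks [CommRing K] {A : Matrix m m K} {B : Matrix n n K}
    (hA : A.IsDiagonalizable) (hB : B.IsDiagonalizable) :
    (Matrix.fromBlocks A 0 0 B).IsDiagonalizable := by
  obtain ⟨U, d, rfl⟩ := hA
  obtain ⟨V, e, rfl⟩ := hB
  refine ⟨⟨Matrix.fromBlocks U 0 0 V, Matrix.fromBlocks ↑U⁻¹ 0 0 ↑V⁻¹, ?_, ?_⟩,
    Sum.elim d e, ?_⟩ <;>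
    simp [fromBlocks_multiply, ← fromBlocks_diagonal, -coe_units_inv]

theorem isDiagonalizable_of_basis_eigenvectors [CommRing K] {A : Matrix n n K}
    (b : Module.Basis n K (n → K)) (d : n → K) (hb : ∀ i, A *ᵥ b i = d i • b i) :
    A.IsDiagonalizable := by
  let c := Pi.basisFun K n
  have hdiag : LinearMap.toMatrix b b (toLin' A) = diagonal d := by
    ext i j
    rw [LinearMap.toMatrix_apply, toLin'_apply, hb, map_smul, b.repr_self]
    rcases eq_or_ne i j with rfl | hij <;> simp [*]
  refine ⟨⟨c.toMatrix b, b.toMatrix c, c.toMatrix_mul_toMatrix_flip b,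
    b.toMatrix_mul_toMatrix_flip c⟩, d, ?_⟩
  change A = c.toMatrix b * _ * b.toMatrix c
  rw [← hdiag, basis_toMatrix_mul_linearMap_toMatrix_mul_basis_toMatrix,
    LinearMap.toMatrix_eq_toMatrix', LinearMap.toMatrix'_toLin']

theorem isDiagonalizable_of_squarefree_aeval_eq_zero [Field K] [IsAlgClosed K]
    {A : Matrix n n K} {p : K[X]} (hp : Squarefree p) (hA : aeval A p = 0) :
    A.IsDiagonalizable := by
  classical
  let f : Module.End K (n → K) := toLin' A
  have hf : aeval f p = 0 := by
    rw [show f = toLinAlgEquiv' A from rfl, aeval_algEquiv, AlgHom.comp_apply, hA, map_zero]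
  have hspan : ⨆ μ : K, f.eigenspace μ = ⊤ :=
    (Module.End.isSemisimple_of_squarefree_aeval_eq_zero hp hf).iSup_eigenspace_eq_top
  have hint : DirectSum.IsInternal fun μ : K => f.eigenspace μ :=
    DirectSum.isInternal_submodule_of_iSupIndep_of_iSup_eq_top
      (Module.End.eigenspaces_iSupIndep f) hspan
  let b₀ := hint.collectedBasis fun μ => Module.finBasis K (f.eigenspace μ)
  have : Fintype (Σ μ : K, Fin (Module.finrank K (f.eigenspace μ))) :=
    FiniteDimensional.fintypeBasisIndex b₀
  let e := Fintype.equivOfCardEq (by simpa using (Module.finrank_eq_card_basis b₀).symm)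
  refine isDiagonalizable_of_basis_eigenvectors (b₀.reindex e) (fun i => (e.symm i).1)
    fun i => ?_
  rw [b₀.reindex_apply, ← toLin'_apply]
  exact Module.End.mem_eigenspace_iff.mp (hint.collectedBasis_mem _ _)

theorem isDiagonalizable_of_squarefree_charpoly [Field K] [IsAlgClosed K] {A : Matrix n n K}
    (hA : Squarefree A.charpoly) : A.IsDiagonalizable :=
  isDiagonalizable_of_squarefree_aeval_eq_zero hA A.aeval_self_charpoly

end Matrix

theorem AdjoinRoot.minpoly_root_of_monic {R : Type*} [CommRing R] [IsDomain R] {q : R[X]}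
    (hq : q.Monic) (hdeg : q.natDegree ≠ 0) : minpoly R (AdjoinRoot.root q) = q := by
  have : Nontrivial (AdjoinRoot q) :=
    AdjoinRoot.nontrivial q fun h => hdeg (natDegree_eq_of_degree_eq_some h)
  have hroot : aeval (AdjoinRoot.root q) q = 0 := AdjoinRoot.aeval_eq q ▸ AdjoinRoot.mk_self
  have hint : IsIntegral R (AdjoinRoot.root q) := ⟨q, hq, hroot⟩
  refine eq_of_monic_of_dvd_of_natDegree_le hq (minpoly.monic hint) ?_
    (natDegree_le_natDegree (minpoly.min R _ hq hroot))
  rw [← AdjoinRoot.mk_eq_zero, ← AdjoinRoot.aeval_eq]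
  exact minpoly.aeval R _

theorem Polynomial.Monic.squarefree_map_of_irreducible {K : Type*} [Field K] [CharZero K]
    {q : ℤ[X]} (hq : q.Monic) (hirr : Irreducible q) :
    Squarefree (q.map (Int.castRingHom K)) := by
  have hsep : (q.map (algebraMap ℤ ℚ)).Separable :=
    PerfectField.separable_of_irreducible
      (hq.irreducible_iff_irreducible_map_fraction_map.mp hirr)
  have hsf := (hsep.map (f := algebraMap ℚ K)).squarefree
  rwa [Polynomial.map_map, RingHom.ext_int ((algebraMap ℚ K).comp _) (Int.castRingHom K)] at hsf

theorem Polynomial.Monic.prod_normalizedFactors {R : Type*} [CommRing R] [IsDomain R]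
    [StrongNormalizationMonoid R] [UniqueFactorizationMonoid R] {p : R[X]} (hp : p.Monic) :
    (UniqueFactorizationMonoid.normalizedFactors p).prod = p := by
  rw [UniqueFactorizationMonoid.prod_normalizedFactors_eq hp.ne_zero, hp.normalize_eq_self]

theorem Polynomial.Monic.monic_of_mem_normalizedFactors {R : Type*} [CommRing R] [IsDomain R]
    [NormalizationMonoid R] [UniqueFactorizationMonoid R] {p q : R[X]} (hp : p.Monic)
    (hq : q ∈ UniqueFactorizationMonoid.normalizedFactors p) : q.Monic := by
  have hunit :=
    hp.isUnit_leadingCoeff_of_dvd (UniqueFactorizationMonoid.dvd_of_mem_normalizedFactors hq)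
  rw [Monic, ← normalize_eq_one.mpr hunit, ← leadingCoeff_normalize,
    UniqueFactorizationMonoid.normalize_normalized_factor q hq]

def IsCharpolyOfDiagonalizable (K : Type*) [CommRing K] (p : ℤ[X]) : Prop :=
  ∃ (ι : Type) (_ : Fintype ι) (_ : DecidableEq ι) (M : Matrix ι ι ℤ),
    M.charpoly = p ∧ (M.map (Int.cast : ℤ → K)).IsDiagonalizable

namespace IsCharpolyOfDiagonalizable

variable {K : Type*}

theorem one [CommRing K] : IsCharpolyOfDiagonalizable K 1 :=
  ⟨Fin 0, inferInstance, inferInstance, 0, Matrix.charpoly_isEmpty, 1, 0, Subsingleton.elim _ _⟩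

theorem mul [CommRing K] {p q : ℤ[X]} (hp : IsCharpolyOfDiagonalizable K p)
    (hq : IsCharpolyOfDiagonalizable K q) : IsCharpolyOfDiagonalizable K (p * q) := by
  obtain ⟨ι, _, _, M, rfl, hM⟩ := hp
  obtain ⟨κ, _, _, N, rfl, hN⟩ := hq
  refine ⟨ι ⊕ κ, inferInstance, inferInstance, Matrix.fromBlocks M 0 0 N,
    Matrix.charpoly_fromBlocks_zero₁₂ M 0 N, ?_⟩
  rw [Matrix.fromBlocks_map, Matrix.map_zero _ Int.cast_zero, Matrix.map_zero _ Int.cast_zero]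
  exact Matrix.IsDiagonalizable.fromBlocks hM hN

theorem of_monic_of_irreducible [Field K] [IsAlgClosed K] [CharZero K] {q : ℤ[X]}
    (hq : q.Monic) (hirr : Irreducible q) : IsCharpolyOfDiagonalizable K q := by
  let pb := AdjoinRoot.powerBasis' hq
  let M := Algebra.leftMulMatrix pb.basis pb.gen
  have hdeg : q.natDegree ≠ 0 := fun h0 =>
    hirr.not_isUnit (hq.natDegree_eq_zero.mp h0 ▸ isUnit_one)
  have hM : M.charpoly = q := by
    rw [charpoly_leftMulMatrix]
    exact AdjoinRoot.minpoly_root_of_monic hq hdeg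
  refine ⟨Fin pb.dim, inferInstance, inferInstance, M, hM,
    Matrix.isDiagonalizable_of_squarefree_charpoly ?_⟩
  change Squarefree (M.map (Int.castRingHom K)).charpoly
  rw [Matrix.charpoly_map, hM]
  exact hq.squarefree_map_of_irreducible hirr

theorem of_monic [Field K] [IsAlgClosed K] [CharZero K] {p : ℤ[X]} (hp : p.Monic) :
    IsCharpolyOfDiagonalizable K p := by
  rw [← hp.prod_normalizedFactors]
  refine Multiset.prod_induction _ _ (fun _ _ => mul) one fun q hq => ?_
  exact of_monic_of_irreducible (hp.monic_of_mem_normalizedFactors hq)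
    (UniqueFactorizationMonoid.irreducible_of_normalized_factor q hq)

end IsCharpolyOfDiagonalizable

theorem EP_matrix_from_polynomial_general (n : ℕ) (P f₀ h : ℤ[X])
    (hPmonic : P.Monic) (hPdeg : P.natDegree = 2 * n + 1) (hsplit : P = f₀ * h)
    (hf₀zero : f₀.eval 0 = -1)
    (hhmonic : h.Monic) (hhself : h.reverse = h) :
    ∃ M : Matrix (Fin (2 * n + 1)) (Fin (2 * n + 1)) ℤ,
      M.det = 1 ∧ M.charpoly = P ∧
      ∃ (U : (Matrix (Fin (2 * n + 1)) (Fin (2 * n + 1)) ℂ)ˣ)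
        (d : Fin (2 * n + 1) → ℂ),
        M.map (Int.cast : ℤ → ℂ) =
          (U : Matrix _ _ ℂ) * Matrix.diagonal d * ((U⁻¹ : _ˣ) : Matrix _ _ ℂ) := by
  obtain ⟨ι, _, _, M, hM, hdiag⟩ := IsCharpolyOfDiagonalizable.of_monic (K := ℂ) hPmonic
  have hcard : Fintype.card ι = 2 * n + 1 := by
    rw [← hPdeg, ← hM, Matrix.charpoly_natDegree_eq_dim]
  let e := Fintype.equivFinOfCardEq hcard
  have hP0 : P.coeff 0 = -1 := by
    rw [hsplit, mul_coeff_zero, coeff_zero_eq_eval_zero, hf₀zero, ← hhself, coeff_zero_reverse,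
      hhmonic.leadingCoeff, mul_one]
  refine ⟨Matrix.reindex e e M, ?_, by rw [Matrix.charpoly_reindex, hM], ?_⟩
  · rw [Matrix.det_reindex_self, Matrix.det_eq_sign_charpoly_coeff, hM, hP0, hcard,
      Odd.neg_one_pow ⟨n, rfl⟩, neg_one_mul, neg_neg]
  · have hdiag' := hdiag.reindex e
    rwa [Matrix.reindex_apply, Matrix.submatrix_map] at hdiag'

theorem EP_matrix_from_polynomial (n : ℕ) (hn : 1 < n) (P f₀ h : ℤ[X])
    (hPmonic : P.Monic) (hPdeg : P.natDegree = 2 * n + 1) (hsplit : P = f₀ * h)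
    (hf₀monic : f₀.Monic) (hf₀deg : f₀.natDegree = 3)
    (α : ℝ) (hαroot : (f₀.map (Int.castRingHom ℝ)).IsRoot α)
    (hαuniq : ∀ x : ℝ, (f₀.map (Int.castRingHom ℝ)).IsRoot x → x = α)
    (hαpos : 0 < α) (hα1 : α ≠ 1) (hf₀zero : f₀.eval 0 = -1)
    (hhmonic : h.Monic) (hhself : h.reverse = h)
    (hhnoreal : ∀ x : ℝ, ¬ (h.map (Int.castRingHom ℝ)).IsRoot x)
    (hhsep : ∀ q : ℤ[X], Irreducible q → q ∣ h →
      Squarefree (q.map (Int.castRingHom ℂ))) :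
    ∃ M : Matrix (Fin (2 * n + 1)) (Fin (2 * n + 1)) ℤ,
      M.det = 1 ∧ M.charpoly = P ∧
      ∃ (U : (Matrix (Fin (2 * n + 1)) (Fin (2 * n + 1)) ℂ)ˣ)
        (d : Fin (2 * n + 1) → ℂ),
        M.map (Int.cast : ℤ → ℂ) =
          (U : Matrix _ _ ℂ) * Matrix.diagonal d * ((U⁻¹ : _ˣ) : Matrix _ _ ℂ) :=
  EP_matrix_from_polynomial_general n P f₀ h hPmonic hPdeg hsplit hf₀zero hhmonic hhself
end

section
/- Let c be a real number, let δ₁, …, δₙ be complex numbers, set Δ = diag(δ₁, …, δₙ), and let A be an n×n complex matrix. If 2·Δᴴ·A·Δ + (Δᴴ)²·A + A·Δ² + c·(Δᴴ·A + A·Δ) = 0 (where Δᴴ denotes the conjugate transpose of Δ), then for all indices i, j one has A_{ji}·(δ_i + conj(δ_j))·(δ_i + conj(δ_j) + c) = 0. In particular, if additionally A_{jj} ≠ 0 for every j, then for every j either Re(δ_j) = 0 or 2·Re(δ_j) + c = 0. -/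
/-!
Statement 12: if `Δ = diag(δ₁, …, δₙ)` and
`2·Δᴴ·A·Δ + (Δᴴ)²·A + A·Δ² + c·(Δᴴ·A + A·Δ) = 0`, then
`A_{ji}·(δ_i + conj(δ_j))·(δ_i + conj(δ_j) + c) = 0` for all `i, j`; in particular, if
all diagonal entries of `A` are nonzero, then for every `j` either `Re(δ_j) = 0` or
`2·Re(δ_j) + c = 0`.
-/

open Matrix in
theorem pluriclosed_matrix_equation (n : ℕ) (c : ℝ) (δ : Fin n → ℂ)
    (A : Matrix (Fin n) (Fin n) ℂ) (Δ : Matrix (Fin n) (Fin n) ℂ)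
    (hΔ : Δ = Matrix.diagonal δ)
    (heq : (2 : ℂ) • (Δᴴ * A * Δ) + Δᴴ ^ 2 * A + A * Δ ^ 2 +
      (c : ℂ) • (Δᴴ * A + A * Δ) = 0) :
    (∀ i j : Fin n,
      A j i * (δ i + starRingEnd ℂ (δ j)) * (δ i + starRingEnd ℂ (δ j) + (c : ℂ)) = 0) ∧
    ((∀ j : Fin n, A j j ≠ 0) →
      ∀ j : Fin n, (δ j).re = 0 ∨ 2 * (δ j).re + c = 0) := by
  subst hΔ
  have key : ∀ i j : Fin n,
      A j i * (δ i + starRingEnd ℂ (δ j)) * (δ i + starRingEnd ℂ (δ j) + (c : ℂ)) = 0 := by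
    intro i j
    have h := congrFun (congrFun heq j) i
    simp only [Matrix.add_apply, Matrix.smul_apply, Matrix.zero_apply, sq,
      Matrix.diagonal_conjTranspose, Matrix.diagonal_mul_diagonal,
      Matrix.mul_diagonal, Matrix.diagonal_mul, Pi.star_apply, smul_eq_mul] at h
    simp only [starRingEnd_apply]
    linear_combination h
  refine ⟨key, fun hA j => ?_⟩
  have h := key j j
  have h2 : (δ j + starRingEnd ℂ (δ j)) * (δ j + starRingEnd ℂ (δ j) + (c : ℂ)) = 0 := by
    rcases mul_eq_zero.mp (mul_assoc (A j j) _ _ ▸ h) with h' | h'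
    · exact absurd h' (hA j)
    · exact h'
  rw [Complex.add_conj] at h2
  rcases mul_eq_zero.mp h2 with h' | h'
  · left
    have := congrArg Complex.re h'
    simpa using this
  · right
    have := congrArg Complex.re h'
    simpa using this
end

section
/- Let n ≥ 3, let c be a nonzero real number, and let Δ be an n×n complex upper-triangular matrix which is diagonal except possibly for its (2,3) entry, and which satisfies Δ₂₂ = Δ₃₃ and Re(Δ₂₂) = 0. Let A be an n×n complex matrix with A₂₂ ≠ 0. If 2·Δᴴ·A·Δ + (Δᴴ)²·A + A·Δ² + c·(Δᴴ·A + A·Δ) = 0 (where Δᴴ denotes the conjugate transpose of Δ), then Δ₂₃ = 0. (Indeed, the (2,3) entry of the left-hand side equals c·A₂₂·Δ₂₃.) -/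
/-!
Only columns 2 and 3 of `Δ` enter the `(2,3)` entry of the left-hand side, and they are `d e₂`
and `b e₂ + d e₃` with `d = Δ₂₂` and `b = Δ₂₃`. Since `d` is purely imaginary,
`star d = -d`, and all terms of order two in `Δ` cancel in that entry, leaving `c · A₂₂ · b`.
-/

namespace Matrix

variable {n R : Type*} [DecidableEq n]

theorem transpose_apply_eq_single_of_apply_eq_zero [Zero R] {Δ : Matrix n n R} {i : n}
    (h : ∀ k, k ≠ i → Δ k i = 0) : Δᵀ i = Pi.single i (Δ i i) := by
  ext k
  by_cases hk : k = i
  · subst hk; simp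
  · simp [hk, h k hk]

variable [Fintype n]

section Semiring

variable [NonUnitalNonAssocSemiring R] {Δ : Matrix n n R} {i j : n}

theorem mul_apply_of_transpose_eq_single {d : R} (h : Δᵀ i = Pi.single i d)
    (B : Matrix n n R) (m : n) : (B * Δ) m i = B m i * d := by
  rw [mul_apply', show (fun k => Δ k i) = Δᵀ i from rfl, h, dotProduct_single]

theorem mul_apply_of_transpose_eq_single_add_single {b d : R}
    (h : Δᵀ j = Pi.single i b + Pi.single j d) (B : Matrix n n R) (m : n) :
    (B * Δ) m j = B m i * b + B m j * d := by
  rw [mul_apply', show (fun k => Δ k j) = Δᵀ j from rfl, h, dotProduct_add,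
    dotProduct_single, dotProduct_single]

theorem conjTranspose_mul_apply_of_transpose_eq_single [StarRing R] {d : R}
    (h : Δᵀ i = Pi.single i d) (B : Matrix n n R) (l : n) :
    (Δᴴ * B) i l = star d * B i l := by
  rw [mul_apply', show Δᴴ i = star (Δᵀ i) from rfl, h, ← Pi.single_star, single_dotProduct]

end Semiring

theorem pluriclosed_expr_apply_of_jordan_block [CommRing R] [StarRing R]
    {Δ : Matrix n n R} {i j : n} {b d : R}
    (hi : Δᵀ i = Pi.single i d) (hj : Δᵀ j = Pi.single i b + Pi.single j d)
    (hd : star d = -d) (A : Matrix n n R) (c : R) :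
    ((2 : R) • (Δᴴ * A * Δ) + Δᴴ ^ 2 * A + A * Δ ^ 2 + c • (Δᴴ * A + A * Δ)) i j =
      c * A i i * b := by
  have hrow (B : Matrix n n R) (l : n) : (Δᴴ * B) i l = -d * B i l := by
    rw [conjTranspose_mul_apply_of_transpose_eq_single hi, hd]
  simp only [add_apply, smul_apply, smul_eq_mul, sq, Matrix.mul_assoc Δᴴ Δᴴ,
    ← Matrix.mul_assoc A Δ Δ, mul_apply_of_transpose_eq_single_add_single hj,
    mul_apply_of_transpose_eq_single hi, hrow]
  ring

end Matrix

theorem Complex.star_eq_neg_of_re_eq_zero {z : ℂ} (h : z.re = 0) : star z = -z :=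
  Complex.ext (by simp [h]) (by simp)

open Matrix in
theorem pluriclosed_nondiagonalizable (n : ℕ) (hn : 3 ≤ n) (c : ℝ) (hc : c ≠ 0)
    (Δ A : Matrix (Fin n) (Fin n) ℂ)
    (hdiag : ∀ i j : Fin n, i ≠ j →
      ¬(i = (⟨1, by omega⟩ : Fin n) ∧ j = (⟨2, by omega⟩ : Fin n)) → Δ i j = 0)
    (hΔ23 : Δ ⟨1, by omega⟩ ⟨1, by omega⟩ = Δ ⟨2, by omega⟩ ⟨2, by omega⟩)
    (hre : (Δ (⟨1, by omega⟩ : Fin n) (⟨1, by omega⟩ : Fin n)).re = 0)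
    (hA : A (⟨1, by omega⟩ : Fin n) (⟨1, by omega⟩ : Fin n) ≠ 0)
    (heq : (2 : ℂ) • (Δᴴ * A * Δ) + Δᴴ ^ 2 * A + A * Δ ^ 2 +
      (c : ℂ) • (Δᴴ * A + A * Δ) = 0) :
    Δ (⟨1, by omega⟩ : Fin n) (⟨2, by omega⟩ : Fin n) = 0 ∧
    ((2 : ℂ) • (Δᴴ * A * Δ) + Δᴴ ^ 2 * A + A * Δ ^ 2 +
        (c : ℂ) • (Δᴴ * A + A * Δ)) (⟨1, by omega⟩ : Fin n) (⟨2, by omega⟩ : Fin n) =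
      (c : ℂ) * A ⟨1, by omega⟩ ⟨1, by omega⟩ * Δ ⟨1, by omega⟩ ⟨2, by omega⟩ := by
  set i : Fin n := ⟨1, by omega⟩
  set j : Fin n := ⟨2, by omega⟩
  have hij : i ≠ j := by simp [i, j, Fin.ext_iff]
  have hcol_i : Δᵀ i = Pi.single i (Δ i i) :=
    transpose_apply_eq_single_of_apply_eq_zero fun k hk => hdiag k i hk fun h => hij h.2
  have hcol_j : Δᵀ j = Pi.single i (Δ i j) + Pi.single j (Δ i i) := by
    ext k
    by_cases hki : k = i
    · simp [hki, hij]
    by_cases hkj : k = j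
    · simp [hkj, hij.symm, hΔ23]
    · simp [hki, hkj, hdiag k j hkj fun h => hki h.1]
  have key := pluriclosed_expr_apply_of_jordan_block hcol_i hcol_j
    (Complex.star_eq_neg_of_re_eq_zero hre) A c
  refine ⟨?_, key⟩
  rw [heq, Matrix.zero_apply, eq_comm] at key
  simpa [hc, hA] using key
end
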